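/- arXiv:1702.01039 — 2 statements merged into one kernel-verified Lean document; each statement's English description precedes it below -/
import Mathlib

section
/- Fix 0 < p < 2t and set q = p/(2t), so that 0 < q < 1, and define φ(a) = (a^q + (1−a)^q)^{1/p} − 1 on [0,1]. Then there is a constant κ > 0 (depending only on p and t) such that φ(a) ≥ κ · min{a^q, (1−a)^q} for all a ∈ [0,1]. -/
open Set

private lemma stmt_6_aux (p t : ℝ) (hp : 0 < p) (ht : 0 < t) (hpt : p < 2 * t) :
    ∃ κ : ℝ, 0 < κ ∧ ∀ a : ℝ, 0 ≤ a → a ≤ 1/2 →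
      κ * a ^ (p / (2 * t)) ≤
        (a ^ (p / (2 * t)) + (1 - a) ^ (p / (2 * t))) ^ (1 / p) - 1 := by
  set q := p / (2 * t) with hq
  have h2t : (0:ℝ) < 2 * t := by linarith
  have hq0 : 0 < q := div_pos hp h2t
  have hq1 : q < 1 := (div_lt_one h2t).2 hpt
  have hc1 : (0:ℝ) < 1 - (1/2:ℝ) ^ (1 - q) := by
    have : (1/2:ℝ) ^ (1 - q) < 1 :=
      Real.rpow_lt_one (by norm_num) (by norm_num) (by linarith)
    linarith
  have hc2 : (0:ℝ) < min (1/p) ((2:ℝ) ^ (1/p) - 1) := by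
    have : (1:ℝ) < (2:ℝ) ^ (1/p) :=
      Real.one_lt_rpow_iff_of_pos (by norm_num) |>.2 (Or.inl ⟨by norm_num, by positivity⟩)
    exact lt_min (by positivity) (by linarith)
  set c1 := 1 - (1/2:ℝ) ^ (1 - q) with hc1def
  set c2 := min (1/p) ((2:ℝ) ^ (1/p) - 1) with hc2def
  refine ⟨c1 * c2, mul_pos hc1 hc2, fun a ha0 ha2 => ?_⟩
  rcases eq_or_lt_of_le ha0 with rfl | ha0'
  · simp [Real.zero_rpow hq0.ne', Real.one_rpow]
  have ha1 : a ≤ 1 := by linarith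
  have h1a0 : (0:ℝ) < 1 - a := by linarith
  -- a ≤ a^q * (1/2)^(1-q), since a^(1-q) ≤ (1/2)^(1-q)
  have haq_pos : 0 < a ^ q := Real.rpow_pos_of_pos ha0' q
  have key1 : a ≤ a ^ q * (1/2:ℝ) ^ (1 - q) := by
    have heq : a = a ^ q * a ^ (1 - q) := by
      rw [← Real.rpow_add ha0', add_sub_cancel, Real.rpow_one]
    calc a = a ^ q * a ^ (1 - q) := heq
      _ ≤ a ^ q * (1/2:ℝ) ^ (1 - q) := mul_le_mul_of_nonneg_left
          (Real.rpow_le_rpow ha0 ha2 (by linarith)) haq_pos.le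
  -- δ := a^q + (1-a)^q - 1
  set δ := a ^ q + (1 - a) ^ q - 1 with hδ
  have h1aq : 1 - a ≤ (1 - a) ^ q :=
    by simpa using Real.rpow_le_rpow_of_exponent_ge h1a0 (by linarith) hq1.le
  have hδge : c1 * a ^ q ≤ δ := by
    have h1 : c1 * a ^ q ≤ a ^ q - a := by
      rw [hc1def]; nlinarith [key1, haq_pos.le]
    rw [hδ]; linarith
  have hδ0 : 0 ≤ δ := le_trans (by positivity) hδge
  have hδ1 : δ ≤ 1 := by
    have h1 : a ^ q ≤ 1 := Real.rpow_le_one ha0 ha1 hq0.le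
    have h2 : (1 - a) ^ q ≤ 1 := Real.rpow_le_one h1a0.le (by linarith) hq0.le
    rw [hδ]; linarith
  have hsum : a ^ q + (1 - a) ^ q = 1 + δ := by rw [hδ]; ring
  -- (1+δ)^(1/p) - 1 ≥ c2 * δ
  have hmain : c2 * δ ≤ (1 + δ) ^ (1/p) - 1 := by
    rcases le_or_gt p 1 with hple | hpgt
    · -- 1/p ≥ 1 : Bernoulli
      have hr : (1:ℝ) ≤ 1/p := by rw [le_div_iff₀ hp]; linarith
      have := one_add_mul_self_le_rpow_one_add (s := δ) (by linarith) hr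
      have hc2le : c2 ≤ 1/p := min_le_left _ _
      nlinarith
    · -- 1/p < 1 : concavity chord on [1,2]
      have hr0 : 0 < 1/p := by positivity
      have hr1 : 1/p ≤ 1 := by
        rw [div_le_one hp]; linarith
      have hcc := (Real.concaveOn_rpow hr0.le hr1).2
        (show (1:ℝ) ∈ Ici (0:ℝ) by norm_num) (show (2:ℝ) ∈ Ici (0:ℝ) by norm_num)
        (show (0:ℝ) ≤ 1 - δ by linarith) hδ0 (by ring)
      have h12 : (1 - δ) • (1:ℝ) + δ • (2:ℝ) = 1 + δ := by
        simp [smul_eq_mul]; ring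
      rw [h12] at hcc
      simp only [smul_eq_mul, Real.one_rpow] at hcc
      have hc2le : c2 ≤ (2:ℝ) ^ (1/p) - 1 := min_le_right _ _
      nlinarith
  calc c1 * c2 * a ^ q = c2 * (c1 * a ^ q) := by ring
    _ ≤ c2 * δ := by nlinarith
    _ ≤ (1 + δ) ^ (1/p) - 1 := hmain
    _ = (a ^ q + (1 - a) ^ q) ^ (1/p) - 1 := by rw [hsum]

theorem stmt_6 (p t : ℝ) (hp : 0 < p) (ht : 0 < t) (hpt : p < 2 * t) :
    ∃ κ : ℝ, 0 < κ ∧ ∀ a ∈ Icc (0:ℝ) 1,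
      κ * min (a ^ (p / (2 * t))) ((1 - a) ^ (p / (2 * t))) ≤
        (a ^ (p / (2 * t)) + (1 - a) ^ (p / (2 * t))) ^ (1 / p) - 1 := by
  obtain ⟨κ, hκ, h⟩ := stmt_6_aux p t hp ht hpt
  refine ⟨κ, hκ, fun a ⟨ha0, ha1⟩ => ?_⟩
  rcases le_or_gt a (1/2) with hle | hgt
  · calc κ * min (a ^ (p / (2 * t))) ((1 - a) ^ (p / (2 * t)))
        ≤ κ * a ^ (p / (2 * t)) :=
          mul_le_mul_of_nonneg_left (min_le_left _ _) hκ.le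
      _ ≤ _ := h a ha0 hle
  · have := h (1 - a) (by linarith) (by linarith)
    rw [sub_sub_cancel] at this
    calc κ * min (a ^ (p / (2 * t))) ((1 - a) ^ (p / (2 * t)))
        ≤ κ * (1 - a) ^ (p / (2 * t)) :=
          mul_le_mul_of_nonneg_left (min_le_right _ _) hκ.le
      _ ≤ ((1 - a) ^ (p / (2 * t)) + a ^ (p / (2 * t))) ^ (1 / p) - 1 := this
      _ = _ := by rw [add_comm]
end

section
/- Let u, w ≥ 0 be reals, t > 1, y > 0, and n_s ≥ 2. Then (1 + (uw)^{(t−1)/2} y²)^{−n_s} − [(1 + u^{t−1}y²)(1 + w^{t−1}y²)]^{−n_s/2} ≤ (n_s/2) · (|u^{(t−1)/2} − w^{(t−1)/2}|² / (u^{t−1} + w^{t−1})) · (1 + (uw)^{(t−1)/2} y²)^{−n_s}, provided u^{t−1} + w^{t−1} > 0. -/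
/-!
Write `a = u^((t-1)/2)`, `b = w^((t-1)/2)`, `C = 1 + a b y²` and `Y = (1 + a²y²)(1 + b²y²)`.
Then `Y = C² + (a-b)²y²`, so `C² ≤ Y`, and the tangent-line bound for the convex map
`x ↦ x^m` (Bernoulli's inequality), applied to `x = C⁻², Y⁻¹` with `m = n_s/2`, gives
`C^(-2m) - Y^(-m) ≤ m ((a-b)²y² / Y) C^(-2m)`. Finally `y²(a² + b²) ≤ Y`.
-/

open Real

lemma rpow_add_mul_sub_le_rpow {r s m : ℝ} (hr : 0 ≤ r) (hs : 0 < s) (hm : 1 ≤ m) :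
    s ^ m + m * (r - s) * s ^ (m - 1) ≤ r ^ m := by
  have bernoulli : 1 + m * (r / s - 1) ≤ (r / s) ^ m := by
    simpa using one_add_mul_self_le_rpow_one_add (s := r / s - 1)
      (by linarith [div_nonneg hr hs.le]) hm
  have hsm : s ^ m = s * s ^ (m - 1) := by
    rw [← rpow_one_add' hs.le (by linarith)]; ring_nf
  calc s ^ m + m * (r - s) * s ^ (m - 1) = (1 + m * (r / s - 1)) * s ^ m := by
        rw [hsm]; field_simp
    _ ≤ (r / s) ^ m * s ^ m := by gcongr
    _ = r ^ m := by rw [div_rpow hr hs.le, div_mul_cancel₀ _ (rpow_pos_of_pos hs m).ne']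

lemma rpow_neg_sub_rpow_neg_le {A B m : ℝ} (hA : 0 < A) (hAB : A ≤ B) (hm : 1 ≤ m) :
    A ^ (-m) - B ^ (-m) ≤ m * (A⁻¹ - B⁻¹) * A ^ (-(m - 1)) := by
  have hB := hA.trans_le hAB
  have := rpow_add_mul_sub_le_rpow (inv_nonneg.2 hB.le) (inv_pos.2 hA) hm
  simp only [inv_rpow hA.le, inv_rpow hB.le, ← rpow_neg hA.le, ← rpow_neg hB.le] at this
  linarith

lemma one_add_mul_mul_sq_rpow_neg_sub_le (a b y m : ℝ) (hab : 0 ≤ a * b)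
    (hpos : 0 < a ^ 2 + b ^ 2) (hm : 1 ≤ m) :
    (1 + a * b * y ^ 2) ^ (-(2 * m)) - ((1 + a ^ 2 * y ^ 2) * (1 + b ^ 2 * y ^ 2)) ^ (-m) ≤
      m * ((a - b) ^ 2 / (a ^ 2 + b ^ 2)) * (1 + a * b * y ^ 2) ^ (-(2 * m)) := by
  set C := 1 + a * b * y ^ 2
  set Y := (1 + a ^ 2 * y ^ 2) * (1 + b ^ 2 * y ^ 2)
  have hC : 0 < C := by positivity
  have hY : 0 < Y := by positivity
  have hCY : C ^ 2 + (a - b) ^ 2 * y ^ 2 = Y := by ring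
  have hX : (C ^ 2) ^ (-m) = C ^ (-(2 * m)) := by
    rw [← rpow_natCast, ← rpow_mul hC.le]; push_cast; ring_nf
  have key := rpow_neg_sub_rpow_neg_le (sq_pos_of_pos hC) (by nlinarith : C ^ 2 ≤ Y) hm
  have hX1 : (C ^ 2) ^ (-(m - 1)) = C ^ 2 * C ^ (-(2 * m)) := by
    rw [← hX, show -(m - 1) = 1 + -m by ring, rpow_add (by positivity), rpow_one]
  have hfrac : (a - b) ^ 2 * y ^ 2 / Y ≤ (a - b) ^ 2 / (a ^ 2 + b ^ 2) := by
    rw [div_le_div_iff₀ hY hpos]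
    have : (0 : ℝ) ≤ 1 + a ^ 2 * b ^ 2 * y ^ 4 := by positivity
    nlinarith [mul_nonneg (sq_nonneg (a - b)) this]
  calc _ ≤ m * ((C ^ 2)⁻¹ - Y⁻¹) * (C ^ 2) ^ (-(m - 1)) := hX ▸ key
    _ = m * ((a - b) ^ 2 * y ^ 2 / Y) * C ^ (-(2 * m)) := by
        rw [hX1, ← hCY]; field_simp; ring
    _ ≤ _ := by gcongr

theorem stmt_13_general (u w t y ns : ℝ) (hu : 0 ≤ u) (hw : 0 ≤ w)
    (hns : 2 ≤ ns) (hpos : 0 < u ^ (t - 1) + w ^ (t - 1)) :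
    (1 + (u * w) ^ ((t - 1) / 2) * y ^ 2) ^ (-ns) -
        ((1 + u ^ (t - 1) * y ^ 2) * (1 + w ^ (t - 1) * y ^ 2)) ^ (-ns / 2) ≤
      (ns / 2) * (|u ^ ((t - 1) / 2) - w ^ ((t - 1) / 2)| ^ 2 / (u ^ (t - 1) + w ^ (t - 1)))
        * (1 + (u * w) ^ ((t - 1) / 2) * y ^ 2) ^ (-ns) := by
  have sq_rpow_half {v : ℝ} (hv : 0 ≤ v) : (v ^ ((t - 1) / 2)) ^ 2 = v ^ (t - 1) := by
    rw [← rpow_natCast, ← rpow_mul hv]; norm_num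
  rw [← sq_rpow_half hu, ← sq_rpow_half hw] at hpos ⊢
  rw [mul_rpow hu hw, sq_abs, neg_div, show -ns = -(2 * (ns / 2)) by ring]
  exact one_add_mul_mul_sq_rpow_neg_sub_le _ _ y _ (by positivity) hpos (by linarith)

theorem stmt_13 (u w t y ns : ℝ) (hu : 0 ≤ u) (hw : 0 ≤ w) (ht : 1 < t) (hy : 0 < y)
    (hns : 2 ≤ ns) (hpos : 0 < u ^ (t - 1) + w ^ (t - 1)) :
    (1 + (u * w) ^ ((t - 1) / 2) * y ^ 2) ^ (-ns) -
        ((1 + u ^ (t - 1) * y ^ 2) * (1 + w ^ (t - 1) * y ^ 2)) ^ (-ns / 2) ≤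
      (ns / 2) * (|u ^ ((t - 1) / 2) - w ^ ((t - 1) / 2)| ^ 2 / (u ^ (t - 1) + w ^ (t - 1)))
        * (1 + (u * w) ^ ((t - 1) / 2) * y ^ 2) ^ (-ns) :=
  stmt_13_general u w t y ns hu hw hns hpos
end
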